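/- arXiv:2410.17164 — 3 statements merged into one kernel-verified Lean document; each statement's English description precedes it below -/
import Mathlib

section
/- With A(b_θ n(x) a(t)) denoting the Iwasawa A-projection on SL(2,ℝ), for θ not a multiple of 2π one has ∂/∂t A(b_θ n(x) a(t)) = −(e^{2t} − (x − cot(θ/2))²)/(e^{2t} + (x − cot(θ/2))²) and ∂/∂x A(b_θ n(x) a(t)) = −2(x − cot(θ/2))/(e^{2t} + (x − cot(θ/2))²). -/
noncomputable section

/-- The Iwasawa A-projection `A(b_θ n(x) a(t))`, given by its explicit formula. -/
def Afun (θ x t : ℝ) : ℝ :=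
  t - Real.log (Real.cos (θ/2)^2 + (x^2 + Real.exp (2*t)) * Real.sin (θ/2)^2
      - 2*x*Real.sin (θ/2)*Real.cos (θ/2))

/-- Partial derivatives of the Iwasawa A-projection `A(b_θ n(x) a(t))` for `θ` not a
multiple of `2π`. -/
theorem stmt_2 (θ x t : ℝ) (hθ : ∀ k : ℤ, θ ≠ 2 * Real.pi * k) :
    HasDerivAt (fun t' => Afun θ x t')
      (-(Real.exp (2*t) - (x - Real.cos (θ/2) / Real.sin (θ/2))^2) /
        (Real.exp (2*t) + (x - Real.cos (θ/2) / Real.sin (θ/2))^2)) t ∧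
    HasDerivAt (fun x' => Afun θ x' t)
      (-(2 * (x - Real.cos (θ/2) / Real.sin (θ/2))) /
        (Real.exp (2*t) + (x - Real.cos (θ/2) / Real.sin (θ/2))^2)) x := by
  set s := Real.sin (θ/2) with hs_def
  set c := Real.cos (θ/2) with hc_def
  have hs : s ≠ 0 := by
    intro h
    rcases Real.sin_eq_zero_iff.mp h with ⟨n, hn⟩
    exact hθ n (by linarith [hn])
  set E := Real.exp (2*t) with hE_def
  have hEpos : 0 < E := Real.exp_pos _
  set u := x - c / s with hu_def
  have hsum_pos : 0 < E + u^2 := by positivity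
  -- positivity of the log argument, as a function of x'
  have hgeq : ∀ x' : ℝ, c^2 + (x'^2 + E) * s^2 - 2*x'*s*c
      = s^2 * (E + (x' - c/s)^2) := by
    intro x'
    field_simp
    ring
  have hgpos : ∀ x' : ℝ, 0 < c^2 + (x'^2 + E) * s^2 - 2*x'*s*c := by
    intro x'
    rw [hgeq x']
    have : 0 < E + (x' - c/s)^2 := by positivity
    positivity
  constructor
  · -- derivative in t
    have h0 : HasDerivAt (fun t' : ℝ => 2*t') 2 t := by
      simpa using (hasDerivAt_id t).const_mul 2
    have h1 : HasDerivAt (fun t' => Real.exp (2*t')) (2*E) t := by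
      simpa [hE_def, mul_comm] using h0.exp
    have hinner : HasDerivAt
        (fun t' => c^2 + (x^2 + Real.exp (2*t')) * s^2 - 2*x*s*c)
        ((2*E) * s^2) t :=
      (((h1.const_add (x^2)).mul_const (s^2)).const_add (c^2)).sub_const (2*x*s*c)
    have hlog := hinner.log (hgpos x).ne'
    have htotal := (hasDerivAt_id' t).sub hlog
    have heq : (1 : ℝ) - (2*E) * s^2 / (c^2 + (x^2 + E) * s^2 - 2*x*s*c)
        = -(E - u^2) / (E + u^2) := by
      rw [hgeq x, ← hu_def]
      field_simp
      ring
    exact htotal.congr_deriv heq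
  · -- derivative in x
    have hinner : HasDerivAt
        (fun x' => c^2 + (x'^2 + E) * s^2 - 2*x'*s*c)
        ((2*x) * s^2 - 2*s*c) x := by
      have h1 : HasDerivAt (fun x' : ℝ => x'^2) (2*x) x := by
        simpa [mul_comm] using hasDerivAt_pow 2 x
      have h2 : HasDerivAt (fun x' : ℝ => 2*x'*s*c) (2*s*c) x := by
        have : HasDerivAt (fun x' : ℝ => x' * (2*s*c)) (2*s*c) x := by
          simpa using (hasDerivAt_id x).mul_const (2*s*c)
        convert this using 2 with x'
        ring
      exact (((h1.add_const E).mul_const (s^2)).const_add (c^2)).sub h2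
    have hlog := hinner.log (hgpos x).ne'
    have htotal := hlog.neg
    have hA : (2*x) * s^2 - 2*s*c = s^2 * (2 * u) := by
      rw [hu_def]; field_simp
    have heq : -(((2*x) * s^2 - 2*s*c) / (c^2 + (x^2 + E) * s^2 - 2*x*s*c))
        = -(2 * u) / (E + u^2) := by
      rw [hgeq x, ← hu_def, hA, mul_div_mul_left _ _ (pow_ne_zero 2 hs), neg_div]
    have : HasDerivAt (fun x' => Afun θ x' t) (-(2*u) / (E + u^2)) x := by
      rw [← heq]
      exact ((hasDerivAt_const x t).add htotal).congr_deriv (zero_add _)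
    simpa using this
end
end

section
/- Given C > 0 and 0 < δ < π, there is a constant c₁ > 0 depending only on C and δ such that for all x, t ∈ (−C, C) and all θ ∈ ℝ with θ ∉ (−δ, δ) mod 2π, one has ∂/∂t A(b_θ n(x) a(t)) ≤ 1 − c₁. -/
noncomputable section

lemma Afun_hasDerivAt (θ x t : ℝ)
    (hD : Real.cos (θ/2)^2 + (x^2 + Real.exp (2*t)) * Real.sin (θ/2)^2
      - 2*x*Real.sin (θ/2)*Real.cos (θ/2) ≠ 0) :
    HasDerivAt (fun t' => Afun θ x t')
      (1 - 2 * Real.exp (2*t) * Real.sin (θ/2)^2 /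
        (Real.cos (θ/2)^2 + (x^2 + Real.exp (2*t)) * Real.sin (θ/2)^2
          - 2*x*Real.sin (θ/2)*Real.cos (θ/2))) t := by
  have hexp : HasDerivAt (fun t' : ℝ => Real.exp (2*t')) (2 * Real.exp (2*t)) t := by
    have h1 : HasDerivAt (fun t' : ℝ => 2*t') 2 t := by
      simpa using (hasDerivAt_id t).const_mul 2
    simpa [mul_comm] using h1.exp
  have hg : HasDerivAt (fun t' : ℝ => Real.cos (θ/2)^2 + (x^2 + Real.exp (2*t')) * Real.sin (θ/2)^2
      - 2*x*Real.sin (θ/2)*Real.cos (θ/2)) (2 * Real.exp (2*t) * Real.sin (θ/2)^2) t := by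
    have := (((hexp.const_add (x^2)).mul_const (Real.sin (θ/2)^2)).const_add
      (Real.cos (θ/2)^2)).sub_const (2*x*Real.sin (θ/2)*Real.cos (θ/2))
    simpa using this
  have hlog := hg.log hD
  exact (hasDerivAt_id' t).sub hlog

/-- The key numeric estimate, with `s = sin (θ/2)`, `c = cos (θ/2)` abstracted. -/
lemma key_bound (C δ x t s c : ℝ) (hC : 0 < C) (hδ : Real.cos δ < 1)
    (hx : |x| < C) (ht : |t| < C) (hsc : s^2 + c^2 = 1)
    (hs2 : (1 - Real.cos δ)/2 ≤ s^2) :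
    Real.exp (-(2*C)) * (1 - Real.cos δ) / ((1 + C)^2 + Real.exp (2*C))
      ≤ 2 * Real.exp (2*t) * s^2 /
        (c^2 + (x^2 + Real.exp (2*t)) * s^2 - 2*x*s*c) := by
  have hs2pos : 0 < s^2 := by linarith
  have hexppos : (0:ℝ) < Real.exp (2*t) := Real.exp_pos _
  have hDeq : c^2 + (x^2 + Real.exp (2*t)) * s^2 - 2*x*s*c
      = (c - x*s)^2 + Real.exp (2*t) * s^2 := by ring
  have hDpos : 0 < c^2 + (x^2 + Real.exp (2*t)) * s^2 - 2*x*s*c := by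
    rw [hDeq]
    have : 0 < Real.exp (2*t) * s^2 := by positivity
    nlinarith [sq_nonneg (c - x*s)]
  have hMpos : (0:ℝ) < (1 + C)^2 + Real.exp (2*C) := by positivity
  have hDleM : c^2 + (x^2 + Real.exp (2*t)) * s^2 - 2*x*s*c ≤ (1 + C)^2 + Real.exp (2*C) := by
    rw [hDeq]
    have hs1 : s^2 ≤ 1 := by nlinarith [sq_nonneg c]
    have hc1 : c^2 ≤ 1 := by nlinarith [sq_nonneg s]
    have hxs : |x*s| ≤ C * 1 := by
      rw [abs_mul]
      apply mul_le_mul hx.le _ (abs_nonneg _) hC.le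
      rw [abs_le]; constructor <;> nlinarith [sq_abs s, abs_nonneg s]
    have hcb : |c| ≤ 1 := by
      rw [abs_le]; constructor <;> nlinarith [sq_abs c, abs_nonneg c]
    have h1 : (c - x*s)^2 ≤ (1 + C)^2 := by
      have habs : |c - x*s| ≤ 1 + C := by
        calc |c - x*s| ≤ |c| + |x*s| := abs_sub _ _
          _ ≤ 1 + C := by linarith
      nlinarith [abs_nonneg (c - x*s), sq_abs (c - x*s)]
    have h2 : Real.exp (2*t) * s^2 ≤ Real.exp (2*C) := by
      have he : Real.exp (2*t) ≤ Real.exp (2*C) := by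
        apply Real.exp_le_exp.mpr
        have := (abs_lt.mp ht).2; linarith
      nlinarith
    linarith
  have hNge : Real.exp (-(2*C)) * (1 - Real.cos δ) ≤ 2 * Real.exp (2*t) * s^2 := by
    have he : Real.exp (-(2*C)) ≤ Real.exp (2*t) := by
      apply Real.exp_le_exp.mpr
      have := (abs_lt.mp ht).1; linarith
    calc Real.exp (-(2*C)) * (1 - Real.cos δ)
        ≤ Real.exp (2*t) * (1 - Real.cos δ) := by
          apply mul_le_mul_of_nonneg_right he (by linarith)
      _ ≤ Real.exp (2*t) * (2 * s^2) := by
          apply mul_le_mul_of_nonneg_left (by linarith) hexppos.le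
      _ = 2 * Real.exp (2*t) * s^2 := by ring
  exact div_le_div₀ (by positivity) hNge hDpos hDleM

/-- Given `C > 0` and `0 < δ < π`, there is `c₁ > 0` depending only on `C, δ` such that
`∂/∂t A(b_θ n(x) a(t)) ≤ 1 − c₁` for `x, t ∈ (−C, C)` and `θ ∉ (−δ, δ) mod 2π`. -/
theorem stmt_3 (C δ : ℝ) (hC : 0 < C) (hδ0 : 0 < δ) (hδπ : δ < Real.pi) :
    ∃ c₁ > 0, ∀ θ x t : ℝ, |x| < C → |t| < C →
      (∀ k : ℤ, δ ≤ |θ - 2 * Real.pi * k|) →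
      deriv (fun t' => Afun θ x t') t ≤ 1 - c₁ := by
  have hcosδ : Real.cos δ < 1 := by
    have := Real.cos_lt_cos_of_nonneg_of_le_pi (le_refl 0) hδπ.le hδ0
    simpa using this
  have hMpos : (0:ℝ) < (1 + C)^2 + Real.exp (2*C) := by positivity
  refine ⟨Real.exp (-(2*C)) * (1 - Real.cos δ) / ((1 + C)^2 + Real.exp (2*C)),
    div_pos (by nlinarith [Real.exp_pos (-(2*C))]) hMpos, ?_⟩
  intro θ x t hx ht hθ
  -- lower bound on sin(θ/2)^2
  have hs2half : Real.sin (θ/2)^2 = (1 - Real.cos θ)/2 := by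
    have h1 := Real.cos_sq (θ/2)
    have h2 := Real.sin_sq_add_cos_sq (θ/2)
    have h3 : 2 * (θ/2) = θ := by ring
    rw [h3] at h1
    linarith
  have hcosθ : Real.cos θ ≤ Real.cos δ := by
    set k : ℤ := round (θ / (2 * Real.pi)) with hk
    have hπ := Real.pi_pos
    have hklose : |θ - 2 * Real.pi * k| ≤ Real.pi := by
      have h := abs_sub_round (θ / (2 * Real.pi))
      have heq : θ - 2 * Real.pi * k = (θ / (2 * Real.pi) - k) * (2 * Real.pi) := by
        field_simp
      rw [heq, abs_mul, abs_of_pos (show (0:ℝ) < 2 * Real.pi by positivity)]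
      nlinarith
    have hkfar := hθ k
    have hcoseq : Real.cos θ = Real.cos |θ - 2 * Real.pi * k| := by
      rw [Real.cos_abs]
      have h3 : θ - 2*Real.pi*k + k*(2*Real.pi) = θ := by push_cast; ring
      calc Real.cos θ = Real.cos (θ - 2*Real.pi*k + k*(2*Real.pi)) := by rw [h3]
        _ = Real.cos (θ - 2*Real.pi*k) := Real.cos_add_int_mul_two_pi _ _
    rw [hcoseq]
    exact Real.cos_le_cos_of_nonneg_of_le_pi hδ0.le hklose hkfar
  have hs2 : (1 - Real.cos δ)/2 ≤ Real.sin (θ/2)^2 := by rw [hs2half]; linarith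
  have hs2pos : 0 < Real.sin (θ/2)^2 := by linarith
  have hDeq : Real.cos (θ/2)^2 + (x^2 + Real.exp (2*t)) * Real.sin (θ/2)^2
      - 2*x*Real.sin (θ/2)*Real.cos (θ/2)
      = (Real.cos (θ/2) - x*Real.sin (θ/2))^2 + Real.exp (2*t) * Real.sin (θ/2)^2 := by ring
  have hDpos : 0 < Real.cos (θ/2)^2 + (x^2 + Real.exp (2*t)) * Real.sin (θ/2)^2
      - 2*x*Real.sin (θ/2)*Real.cos (θ/2) := by
    rw [hDeq]
    have : 0 < Real.exp (2*t) * Real.sin (θ/2)^2 := by positivity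
    nlinarith [sq_nonneg (Real.cos (θ/2) - x*Real.sin (θ/2))]
  rw [(Afun_hasDerivAt θ x t (ne_of_gt hDpos)).deriv]
  have hkey := key_bound C δ x t (Real.sin (θ/2)) (Real.cos (θ/2)) hC hcosδ hx ht
    (Real.sin_sq_add_cos_sq (θ/2)) hs2
  linarith [hkey]
end
end

section
/- For any C > 0, the Taylor expansion A(b_θ n(x) a(t)) = t + xθ + ((x² − e^{2t} + 1)/4)·θ² + O(θ³) holds uniformly for x, t ∈ (−C, C) as θ → 0; moreover ∂/∂x A(b_θ n(x) a(t)) = θ + (x/2)θ² + O(θ³) and ∂/∂t A(b_θ n(x) a(t)) = 1 − (e^{2t}/2)θ² + O(θ³), with implied constants depending only on C. -/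
noncomputable section

lemma sin_taylor (y : ℝ) (hy : |y| ≤ 1) : |Real.sin y - y| ≤ |y|^3 := by
  have h := Real.sin_bound hy
  have h2 : |Real.sin y - y| ≤ |Real.sin y - (y - y^3/6)| + |y^3/6| := by
    have := abs_sub (Real.sin y - (y - y^3/6)) (y^3/6)
    rw [show Real.sin y - (y - y^3/6) - y^3/6 = Real.sin y - y by ring] at this
    exact this
  have h3 : |y^3/6| = |y|^3/6 := by rw [abs_div, abs_pow]; norm_num
  have h4 : |y|^4 ≤ |y|^3 := by nlinarith [abs_nonneg y, pow_nonneg (abs_nonneg y) 3]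
  nlinarith [pow_nonneg (abs_nonneg y) 3, pow_le_pow_of_le_one (abs_nonneg y) hy (show 3 ≤ 5 by norm_num)]

lemma log_taylor (u : ℝ) (hu : |u| ≤ 1/2) :
    |Real.log (1 + u) - (u - u^2/2)| ≤ 2*|u|^3 := by
  have h1 : |(-u)| < 1 := by rw [abs_neg]; linarith [abs_nonneg u]
  have h := Real.abs_log_sub_add_sum_range_le h1 2
  simp [Finset.sum_range_succ] at h
  calc |Real.log (1+u) - (u - u^2/2)|
      = |-u + u^2/(1+1) + Real.log (1+u)| := by
        rw [show -u + u^2/(1+1) + Real.log (1+u) = Real.log (1+u) - (u - u^2/2) by ring]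
    _ ≤ |u|^3 / (1 - |u|) := h
    _ ≤ 2*|u|^3 := by
        rw [div_le_iff₀ (by linarith [abs_nonneg u])]
        nlinarith [pow_nonneg (abs_nonneg u) 3]

lemma derivx (θ x t : ℝ)
    (hne : Real.cos (θ/2)^2 + (x^2 + Real.exp (2*t)) * Real.sin (θ/2)^2
      - 2*x*Real.sin (θ/2)*Real.cos (θ/2) ≠ 0) :
    deriv (fun x' => Afun θ x' t) x =
      -((2*x*Real.sin (θ/2)^2 - 2*Real.sin (θ/2)*Real.cos (θ/2)) /
        (Real.cos (θ/2)^2 + (x^2 + Real.exp (2*t)) * Real.sin (θ/2)^2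
          - 2*x*Real.sin (θ/2)*Real.cos (θ/2))) := by
  have h1 : HasDerivAt (fun x' : ℝ => x'^2 + Real.exp (2*t)) (2*x) x := by
    simpa using (hasDerivAt_pow 2 x).add_const (Real.exp (2*t))
  have h2 : HasDerivAt (fun x' : ℝ =>
      Real.cos (θ/2)^2 + (x'^2 + Real.exp (2*t)) * Real.sin (θ/2)^2
        - 2*x'*Real.sin (θ/2)*Real.cos (θ/2))
      (2*x*Real.sin (θ/2)^2 - 2*Real.sin (θ/2)*Real.cos (θ/2)) x := by
    have ha := (h1.mul_const (Real.sin (θ/2)^2)).const_add (Real.cos (θ/2)^2)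
    have hb : HasDerivAt (fun x' : ℝ => 2*x'*Real.sin (θ/2)*Real.cos (θ/2))
        (2*Real.sin (θ/2)*Real.cos (θ/2)) x := by
      have h := (((hasDerivAt_id x).const_mul 2).mul_const (Real.sin (θ/2))).mul_const
        (Real.cos (θ/2))
      simp only [id_eq, mul_one] at h
      exact h
    exact ha.sub hb
  have h3 := (h2.log hne).const_sub t
  simpa [Afun] using h3.deriv

lemma derivt (θ x t : ℝ)
    (hne : Real.cos (θ/2)^2 + (x^2 + Real.exp (2*t)) * Real.sin (θ/2)^2
      - 2*x*Real.sin (θ/2)*Real.cos (θ/2) ≠ 0) :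
    deriv (fun t' => Afun θ x t') t =
      1 - (2*Real.exp (2*t)*Real.sin (θ/2)^2) /
        (Real.cos (θ/2)^2 + (x^2 + Real.exp (2*t)) * Real.sin (θ/2)^2
          - 2*x*Real.sin (θ/2)*Real.cos (θ/2)) := by
  have h0 : HasDerivAt (fun t' : ℝ => Real.exp (2*t')) (2*Real.exp (2*t)) t := by
    have h2t : HasDerivAt (fun t' : ℝ => 2*t') 2 t := by
      simpa using (hasDerivAt_id t).const_mul 2
    simpa [mul_comm] using h2t.exp
  have h2 : HasDerivAt (fun t' : ℝ =>
      Real.cos (θ/2)^2 + (x^2 + Real.exp (2*t')) * Real.sin (θ/2)^2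
        - 2*x*Real.sin (θ/2)*Real.cos (θ/2))
      (2*Real.exp (2*t)*Real.sin (θ/2)^2) t := by
    have ha := (((h0.const_add (x^2)).mul_const (Real.sin (θ/2)^2)).const_add
      (Real.cos (θ/2)^2)).sub_const (2*x*Real.sin (θ/2)*Real.cos (θ/2))
    convert ha using 1
  have h3 := (hasDerivAt_id t).sub (h2.log hne)
  exact h3.deriv

set_option maxHeartbeats 1000000 in
/-- Taylor expansion `A(b_θ n(x) a(t)) = t + xθ + ((x² − e^{2t} + 1)/4)θ² + O(θ³)` as
`θ → 0`, uniformly for `x, t ∈ (−C, C)`, together with the corresponding expansions of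
the partial derivatives in `x` and `t`. -/
theorem stmt_4 (C : ℝ) (hC : 0 < C) :
    ∃ δ > 0, ∃ K > 0, ∀ θ x t : ℝ, |θ| < δ → |x| < C → |t| < C →
      |Afun θ x t - (t + x*θ + ((x^2 - Real.exp (2*t) + 1)/4) * θ^2)| ≤ K * |θ|^3 ∧
      |deriv (fun x' => Afun θ x' t) x - (θ + (x/2) * θ^2)| ≤ K * |θ|^3 ∧
      |deriv (fun t' => Afun θ x t') t - (1 - (Real.exp (2*t)/2) * θ^2)| ≤ K * |θ|^3 := by
  obtain ⟨M, hM_def⟩ : ∃ M : ℝ, M = C^2 + Real.exp (2*C) + 1 := ⟨_, rfl⟩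
  obtain ⟨L, hL_def⟩ : ∃ L : ℝ, L = M + C + 1 := ⟨_, rfl⟩
  have hM : 0 < M := by rw [hM_def]; positivity
  have hL : 0 < L := by rw [hL_def, hM_def]; positivity
  obtain ⟨K, hK_def⟩ : ∃ K : ℝ,
    K = 2*L^3 + L + L*(L+C) + 2*(1+2*C+C^2+2*L+C*L) + 2*M*(L+2) + 1 := ⟨_, rfl⟩
  have hK1 : 2*L^3 + L + L*(L+C) ≤ K := by
    rw [hK_def]
    linarith only [sq_nonneg C, hC, hL, mul_pos hC hL, mul_pos hM hL, hM]
  have hK2 : 2*(1+2*C+C^2+2*L+C*L) ≤ K := by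
    rw [hK_def]
    linarith only [pow_pos hL 3, mul_pos hL hL, mul_pos hC hL, mul_pos hM hL, hM, hL]
  have hK3 : 2*M*(L+2) ≤ K := by
    rw [hK_def]
    linarith only [pow_pos hL 3, mul_pos hL hL, mul_pos hC hL, sq_nonneg C, hC, hL]
  have hKpos : 0 < K := by
    rw [hK_def]
    linarith only [pow_pos hL 3, mul_pos hL hL, mul_pos hC hL, mul_pos hM hL,
      sq_nonneg C, hM, hL, hC]
  refine ⟨min 1 (1/(2*L)), lt_min one_pos (by positivity), K, hKpos, ?_⟩
  intro θ x t hθ hx ht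
  -- basic bounds on θ
  have ha1 : |θ| ≤ 1 := le_trans hθ.le (min_le_left _ _)
  have ha2 : |θ| ≤ 1/(2*L) := le_trans hθ.le (min_le_right _ _)
  have hannn : 0 ≤ |θ| := abs_nonneg θ
  have ha2nn : (0:ℝ) ≤ |θ|^2 := by positivity
  have ha3nn : (0:ℝ) ≤ |θ|^3 := by positivity
  have ha3 : |θ|^2 ≤ |θ| := by
    have := pow_le_pow_of_le_one hannn ha1 (show 1 ≤ 2 by norm_num)
    simpa using this
  have ha4 : |θ|^3 ≤ |θ|^2 := pow_le_pow_of_le_one hannn ha1 (by norm_num)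
  have haLhalf : L*|θ| ≤ 1/2 := by
    have h1 := mul_le_mul_of_nonneg_left ha2 hL.le
    have h2 : L*(1/(2*L)) = 1/2 := by field_simp
    linarith only [h1, h2]
  -- basic bounds on x, t
  have hxb : |x| ≤ C := hx.le
  have hx2 : x^2 ≤ C^2 := by
    have h := abs_lt.mp hx
    nlinarith only [h.1, h.2]
  have hE0 : 0 < Real.exp (2*t) := Real.exp_pos _
  have hEb : Real.exp (2*t) ≤ Real.exp (2*C) := by
    apply Real.exp_le_exp.mpr; linarith only [(abs_lt.mp ht).2]
  have hEM : Real.exp (2*t) ≤ M := by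
    rw [hM_def]; linarith only [hEb, sq_nonneg C]
  have hcoef : |x^2 + Real.exp (2*t) - 1| ≤ M := by
    rw [hM_def, abs_le]
    constructor
    · linarith only [sq_nonneg x, hE0, sq_nonneg C, Real.exp_pos (2*C)]
    · linarith only [hx2, hEb]
  -- trig facts
  have hsin : Real.sin θ = 2*Real.sin (θ/2)*Real.cos (θ/2) := by
    rw [← Real.sin_two_mul]; congr 1; ring
  have habs2 : |θ/2| = |θ|/2 := by rw [abs_div]; norm_num
  have hsb : |Real.sin (θ/2)| ≤ |θ|/2 := by
    calc |Real.sin (θ/2)| ≤ |θ/2| := Real.abs_sin_le_abs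
      _ = |θ|/2 := habs2
  have hsinθ : |Real.sin θ - θ| ≤ |θ|^3 := sin_taylor θ ha1
  have hshalf : |Real.sin (θ/2) - θ/2| ≤ |θ|^3 := by
    have h := sin_taylor (θ/2) (by rw [habs2]; linarith only [ha1, hannn])
    calc |Real.sin (θ/2) - θ/2| ≤ |θ/2|^3 := h
      _ ≤ |θ|^3 := by rw [habs2]; linarith only [ha3nn]
  have hs2diff : |Real.sin (θ/2)^2 - θ^2/4| ≤ |θ|^3 := by
    have h1 : |Real.sin (θ/2) + θ/2| ≤ |θ| := by
      calc |Real.sin (θ/2) + θ/2| ≤ |Real.sin (θ/2)| + |θ/2| := abs_add_le _ _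
        _ ≤ |θ| := by rw [habs2]; linarith only [hsb]
    calc |Real.sin (θ/2)^2 - θ^2/4|
        = |Real.sin (θ/2) - θ/2| * |Real.sin (θ/2) + θ/2| := by
          rw [← abs_mul]; congr 1; ring
      _ ≤ |θ|^3 * |θ| := mul_le_mul hshalf h1 (abs_nonneg _) ha3nn
      _ ≤ |θ|^3 := mul_le_of_le_one_right ha3nn ha1
  -- the quantity u with Q = 1 + u
  obtain ⟨u, hu_def⟩ : ∃ u, u = (x^2 + Real.exp (2*t) - 1) * Real.sin (θ/2)^2
      - x*Real.sin θ := ⟨_, rfl⟩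
  have hQ : Real.cos (θ/2)^2 + (x^2 + Real.exp (2*t)) * Real.sin (θ/2)^2
      - 2*x*Real.sin (θ/2)*Real.cos (θ/2) = 1 + u := by
    rw [hu_def]
    linear_combination Real.sin_sq_add_cos_sq (θ/2) + x*hsin
  have hub : |u| ≤ L*|θ| := by
    have hs2 : Real.sin (θ/2)^2 ≤ |θ|^2/4 := by
      nlinarith only [hsb, sq_abs (Real.sin (θ/2)), abs_nonneg (Real.sin (θ/2)), abs_nonneg θ]
    have h1 : |(x^2 + Real.exp (2*t) - 1) * Real.sin (θ/2)^2| ≤ M*(|θ|^2/4) := by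
      rw [abs_mul, abs_of_nonneg (sq_nonneg (Real.sin (θ/2)))]
      exact mul_le_mul hcoef hs2 (sq_nonneg _) hM.le
    have h2 : |x*Real.sin θ| ≤ C*|θ| := by
      rw [abs_mul]; exact mul_le_mul hxb Real.abs_sin_le_abs (abs_nonneg _) hC.le
    calc |u| ≤ |(x^2 + Real.exp (2*t) - 1) * Real.sin (θ/2)^2| + |x*Real.sin θ| := by
          rw [hu_def]; exact abs_sub _ _
      _ ≤ M*(|θ|^2/4) + C*|θ| := add_le_add h1 h2
      _ ≤ L*|θ| := by
          rw [hL_def]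
          linarith only [mul_le_mul_of_nonneg_left ha3 hM.le,
            mul_nonneg hM.le hannn, hannn, mul_nonneg hC.le hannn]
  have huh : |u| ≤ 1/2 := le_trans hub haLhalf
  have huu := abs_le.mp huh
  have hQpos : (0:ℝ) < 1 + u := by linarith only [huu.1]
  have hQlb : (1:ℝ)/2 ≤ 1 + u := by linarith only [huu.1]
  have hne : Real.cos (θ/2)^2 + (x^2 + Real.exp (2*t)) * Real.sin (θ/2)^2
      - 2*x*Real.sin (θ/2)*Real.cos (θ/2) ≠ 0 := by
    rw [hQ]; linarith only [hQpos]
  -- remainder r3 and v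
  obtain ⟨r3, hr3_def⟩ : ∃ r3, r3 = u + x*θ - (x^2 + Real.exp (2*t) - 1)*(θ^2/4) :=
    ⟨_, rfl⟩
  have hr3 : |r3| ≤ L*|θ|^3 := by
    have hid : r3 = (x^2 + Real.exp (2*t) - 1)*(Real.sin (θ/2)^2 - θ^2/4)
        - x*(Real.sin θ - θ) := by rw [hr3_def, hu_def]; ring
    calc |r3| ≤ |(x^2 + Real.exp (2*t) - 1)*(Real.sin (θ/2)^2 - θ^2/4)|
          + |x*(Real.sin θ - θ)| := by rw [hid]; exact abs_sub _ _
      _ ≤ M*|θ|^3 + C*|θ|^3 := add_le_add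
          (by rw [abs_mul]; exact mul_le_mul hcoef hs2diff (abs_nonneg _) hM.le)
          (by rw [abs_mul]; exact mul_le_mul hxb hsinθ (abs_nonneg _) hC.le)
      _ ≤ L*|θ|^3 := by rw [hL_def]; linarith only [ha3nn]
  obtain ⟨v, hv_def⟩ : ∃ v, v = u + x*θ := ⟨_, rfl⟩
  have hv : |v| ≤ 2*L*|θ|^2 := by
    have hid : v = (x^2 + Real.exp (2*t) - 1)*(θ^2/4) + r3 := by
      rw [hv_def, hr3_def]; ring
    have habs4 : |θ^2/4| = |θ|^2/4 := by rw [abs_div, abs_pow]; norm_num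
    have h1 : |(x^2 + Real.exp (2*t) - 1)*(θ^2/4)| ≤ M*(|θ|^2/4) := by
      rw [abs_mul, habs4]
      exact mul_le_mul_of_nonneg_right hcoef (by positivity)
    have hMC1 : (0:ℝ) ≤ M + C + 1 := by linarith only [hM, hC]
    calc |v| ≤ |(x^2 + Real.exp (2*t) - 1)*(θ^2/4)| + |r3| := by
          rw [hid]; exact abs_add_le _ _
      _ ≤ M*(|θ|^2/4) + L*|θ|^3 := add_le_add h1 hr3
      _ ≤ 2*L*|θ|^2 := by
          rw [hL_def]
          linarith only [mul_le_mul_of_nonneg_left ha4 hMC1,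
            mul_le_mul_of_nonneg_right (show M/4 ≤ M+C+1 by
              linarith only [hM, hC]) ha2nn]
  have hdiffuxθ : |u - x*θ| ≤ (L+C)*|θ| := by
    calc |u - x*θ| ≤ |u| + |x*θ| := abs_sub _ _
      _ ≤ L*|θ| + C*|θ| := add_le_add hub
          (by rw [abs_mul]; exact mul_le_mul_of_nonneg_right hxb (abs_nonneg θ))
      _ = (L+C)*|θ| := by ring
  refine ⟨?_, ?_, ?_⟩
  -- Part 1: value expansion
  · have hA : Afun θ x t = t - Real.log (1+u) := by
      simp only [Afun]; rw [hQ]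
    rw [hA]
    have hlog : |Real.log (1+u) - (u - u^2/2)| ≤ 2*L^3*|θ|^3 := by
      have h := log_taylor u huh
      have h3 : |u|^3 ≤ (L*|θ|)^3 := pow_le_pow_left₀ (abs_nonneg u) hub 3
      have h4 : (L*|θ|)^3 = L^3*|θ|^3 := by ring
      linarith only [h, h3, h4]
    have key1 : t - Real.log (1+u) - (t + x*θ + ((x^2 - Real.exp (2*t) + 1)/4)*θ^2)
        = -(Real.log (1+u) - (u - u^2/2)) - r3 + v*(u - x*θ)/2 := by
      rw [hr3_def, hv_def]; ring
    have hterm3 : |v*(u - x*θ)/2| ≤ L*(L+C)*|θ|^3 := by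
      have h2Lnn : (0:ℝ) ≤ 2*L*|θ|^2 := mul_nonneg (by linarith only [hL]) ha2nn
      calc |v*(u - x*θ)/2| = |v| * |u - x*θ| / 2 := by
            rw [abs_div, abs_mul]; norm_num
        _ ≤ (2*L*|θ|^2) * ((L+C)*|θ|) / 2 := by
            have := mul_le_mul hv hdiffuxθ (abs_nonneg _) h2Lnn
            linarith only [this]
        _ = L*(L+C)*|θ|^3 := by ring
    rw [key1]
    have b1 := abs_le.mp hlog
    have b2 := abs_le.mp hr3
    have b3 := abs_le.mp hterm3
    have bK := mul_le_mul_of_nonneg_right hK1 ha3nn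
    rw [abs_le]
    constructor
    · linarith only [b1.1, b1.2, b2.1, b2.2, b3.1, b3.2, bK]
    · linarith only [b1.1, b1.2, b2.1, b2.2, b3.1, b3.2, bK]
  -- Part 2: x-derivative
  · rw [derivx θ x t hne, hQ]
    have h1u : (1:ℝ)+u ≠ 0 := ne_of_gt hQpos
    have key2 : -((2*x*Real.sin (θ/2)^2 - 2*Real.sin (θ/2)*Real.cos (θ/2))/(1+u))
        - (θ + (x/2)*θ^2)
        = (2*Real.sin (θ/2)*Real.cos (θ/2) - 2*x*Real.sin (θ/2)^2
            - (θ + (x/2)*θ^2)*(1+u))/(1+u) := by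
      field_simp
      ring
    rw [key2]
    obtain ⟨r5, hr5_def⟩ : ∃ r5, r5 = 2*Real.sin (θ/2)*Real.cos (θ/2) - θ
        - 2*x*(Real.sin (θ/2)^2 - θ^2/4) := ⟨_, rfl⟩
    have hPid : 2*Real.sin (θ/2)*Real.cos (θ/2) - 2*x*Real.sin (θ/2)^2
        - (θ + (x/2)*θ^2)*(1+u)
        = r5 + x^2*θ^3/2 - θ*v - x*θ^2*v/2 := by
      rw [hr5_def, hv_def]; ring
    have hr5 : |r5| ≤ (1+2*C)*|θ|^3 := by
      have hid : r5 = (Real.sin θ - θ) - 2*x*(Real.sin (θ/2)^2 - θ^2/4) := by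
        rw [hr5_def, hsin]
      have h2 : |2*x*(Real.sin (θ/2)^2 - θ^2/4)| ≤ 2*C*|θ|^3 := by
        rw [abs_mul, abs_mul, abs_two]
        have := mul_le_mul hxb hs2diff (abs_nonneg _) hC.le
        linarith only [this]
      calc |r5| ≤ |Real.sin θ - θ| + |2*x*(Real.sin (θ/2)^2 - θ^2/4)| := by
            rw [hid]; exact abs_sub _ _
        _ ≤ |θ|^3 + 2*C*|θ|^3 := add_le_add hsinθ h2
        _ = (1+2*C)*|θ|^3 := by ring
    have hT2 : |x^2*θ^3/2| ≤ C^2*|θ|^3/2 := by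
      have heq : |x^2*θ^3/2| = |x|^2*|θ|^3/2 := by
        rw [abs_div, abs_mul, abs_pow, abs_pow]; norm_num
      rw [heq]
      have h := mul_le_mul_of_nonneg_right
        (mul_le_mul hxb hxb (abs_nonneg x) hC.le) ha3nn
      linarith only [h]
    have hT3 : |θ*v| ≤ 2*L*|θ|^3 := by
      rw [abs_mul]
      calc |θ| * |v| ≤ |θ| * (2*L*|θ|^2) := mul_le_mul_of_nonneg_left hv hannn
        _ = 2*L*|θ|^3 := by ring
    have hT4 : |x*θ^2*v/2| ≤ C*L*|θ|^3 := by
      have heq : |x*θ^2*v/2| = |x| * |θ|^2 * |v|/2 := by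
        rw [abs_div, abs_mul, abs_mul, abs_pow]; norm_num
      rw [heq]
      have h1 : |x| * |θ|^2 * |v| ≤ C*|θ|^2*(2*L*|θ|^2) :=
        mul_le_mul (mul_le_mul_of_nonneg_right hxb ha2nn) hv (abs_nonneg v)
          (mul_nonneg hC.le ha2nn)
      have h3 : |θ|^3*|θ| ≤ |θ|^3 := mul_le_of_le_one_right ha3nn ha1
      have h4 := mul_le_mul_of_nonneg_left h3 (le_of_lt (mul_pos hC hL))
      linarith only [h1, h4]
    have hP : |r5 + x^2*θ^3/2 - θ*v - x*θ^2*v/2| ≤ (1+2*C+C^2+2*L+C*L)*|θ|^3 := by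
      have b1 := abs_le.mp hr5
      have b2 := abs_le.mp hT2
      have b3 := abs_le.mp hT3
      have b4 := abs_le.mp hT4
      have b5 : (0:ℝ) ≤ C^2*|θ|^3 := mul_nonneg (sq_nonneg C) ha3nn
      rw [abs_le]
      constructor
      · linarith only [b1.1, b1.2, b2.1, b2.2, b3.1, b3.2, b4.1, b4.2, b5]
      · linarith only [b1.1, b1.2, b2.1, b2.2, b3.1, b3.2, b4.1, b4.2, b5]
    rw [hPid, abs_div, abs_of_pos hQpos, div_le_iff₀ hQpos]
    have h1 : K*|θ|^3*(1/2) ≤ K*|θ|^3*(1+u) :=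
      mul_le_mul_of_nonneg_left hQlb (mul_nonneg hKpos.le ha3nn)
    have h2 : 2*(1+2*C+C^2+2*L+C*L)*|θ|^3 ≤ 2*(K*|θ|^3*(1/2)) := by
      have := mul_le_mul_of_nonneg_right hK2 ha3nn
      linarith only [this]
    linarith only [hP, h1, h2]
  -- Part 3: t-derivative
  · rw [derivt θ x t hne, hQ]
    have h1u : (1:ℝ)+u ≠ 0 := ne_of_gt hQpos
    have key3 : 1 - 2*Real.exp (2*t)*Real.sin (θ/2)^2/(1+u)
        - (1 - Real.exp (2*t)/2*θ^2)
        = (Real.exp (2*t)/2*θ^2*u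
            - 2*Real.exp (2*t)*(Real.sin (θ/2)^2 - θ^2/4))/(1+u) := by
      field_simp
      ring
    rw [key3]
    have hN1 : |Real.exp (2*t)/2*θ^2*u| ≤ M*L/2*|θ|^3 := by
      have heq : |Real.exp (2*t)/2*θ^2*u| = Real.exp (2*t)/2*|θ|^2*|u| := by
        rw [abs_mul, abs_mul, abs_pow,
          abs_of_pos (by positivity : (0:ℝ) < Real.exp (2*t)/2)]
      rw [heq]
      have e2 : Real.exp (2*t)/2 ≤ M/2 := by linarith only [hEM]
      have f1 : Real.exp (2*t)/2*|θ|^2 ≤ M/2*|θ|^2 :=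
        mul_le_mul_of_nonneg_right e2 ha2nn
      have f2 : Real.exp (2*t)/2*|θ|^2*|u| ≤ M/2*|θ|^2*(L*|θ|) :=
        mul_le_mul f1 hub (abs_nonneg u)
          (mul_nonneg (by linarith only [hM]) ha2nn)
      linarith only [f2]
    have hN2 : |2*Real.exp (2*t)*(Real.sin (θ/2)^2 - θ^2/4)| ≤ 2*M*|θ|^3 := by
      rw [abs_mul, abs_mul, abs_two, abs_of_pos hE0]
      have := mul_le_mul hEM hs2diff (abs_nonneg _) hM.le
      linarith only [this]
    have hN : |Real.exp (2*t)/2*θ^2*u - 2*Real.exp (2*t)*(Real.sin (θ/2)^2 - θ^2/4)|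
        ≤ M*(L+2)*|θ|^3 := by
      have b1 := abs_le.mp hN1
      have b2 := abs_le.mp hN2
      have b5 : (0:ℝ) ≤ M*L*|θ|^3 := mul_nonneg (mul_nonneg hM.le hL.le) ha3nn
      rw [abs_le]
      constructor
      · linarith only [b1.1, b1.2, b2.1, b2.2, b5]
      · linarith only [b1.1, b1.2, b2.1, b2.2, b5]
    rw [abs_div, abs_of_pos hQpos, div_le_iff₀ hQpos]
    have h1 : K*|θ|^3*(1/2) ≤ K*|θ|^3*(1+u) :=
      mul_le_mul_of_nonneg_left hQlb (mul_nonneg hKpos.le ha3nn)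
    have h2 : 2*M*(L+2)*|θ|^3 ≤ 2*(K*|θ|^3*(1/2)) := by
      have := mul_le_mul_of_nonneg_right hK3 ha3nn
      linarith only [this]
    linarith only [hN, h1, h2]
end
end
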